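/- In the free-fermion setting, if the only zero-frequency single-fermion modes are two Majorana modes Γ_L, Γ_R with real wavefunctions ψ^L, ψ^R satisfying the Fourier-projection identity F_0(γ_1) = ψ^L_1 Γ_L + ψ^R_1 Γ_R and F_0(γ_{2N}) = ψ^L_{2N} Γ_L + ψ^R_{2N} Γ_R, with cross-boundary amplitudes ψ^R_1 = ψ^L_{2N} = 0 and equal edge amplitudes ψ^L_1 = ψ^R_{2N} = ξ with ξ² ≥ 1/2, then the braiding channel E_α(X) = lim_{D→∞} (1/D) Σ_n U_F^{†n} V(α)† X V(α) U_F^n at angle α_0 = arcsin(1/(√2 ξ)) satisfies E_{α_0}(Γ_R) = p Γ_L and E_{α_0}(Γ_L) = −p Γ_R, where p = √(2ξ² − 1). -/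

import Mathlib

/-! With `a = γ₁ γ_{2N}` one has `a² = -1`, so `V = cos α - sin α • a` is a rotor: conjugation by it
rotates the plane spanned by `γ₁, γ_{2N}` by the angle `2α` and commutes with every other Majorana
operator. For `Γ = Σ ψ_μ γ_μ` this gives
`V† Γ V = Γ + (sin 2α ψ_{2N} - 2 sin² α ψ₁) γ₁ - (sin 2α ψ₁ + 2 sin² α ψ_{2N}) γ_{2N}`.
After `F₀`, which fixes `Γ_L, Γ_R` and sends `γ₁, γ_{2N}` to `ξ Γ_L, ξ Γ_R`, the angle `α₀` is
tuned so that `2 sin² α₀ ξ² = 1` cancels the original mode, while `sin 2α₀ ξ² = √(2ξ² - 1)` is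
the weight of the other one. -/
open Matrix Complex

section Majorana

variable {K A ι : Type*} [CommRing K] [Ring A] [Algebra K A]

theorem rotor_conj_eq {a x d : A} (ha : a * a = -1) (hxa : x * a - a * x = d)
    {c s : K} (hcs : c ^ 2 + s ^ 2 = 1) :
    (c • 1 + s • a) * x * (c • 1 - s • a) = x - (c * s) • d + s ^ 2 • (d * a) := by
  have hax : a * x = x * a - d := by rw [← hxa]; abel
  have hsplit : (c • 1 + s • a) * x * (c • 1 - s • a)
      = (c ^ 2) • x + (c * s) • (a * x - x * a) - s ^ 2 • (a * x * a) := by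
    simp only [add_mul, mul_sub, smul_mul_assoc, mul_smul_comm, one_mul, mul_one]
    module
  have haxa : a * x * a = -x - d * a := by
    rw [hax, sub_mul, mul_assoc, ha]; noncomm_ring
  rw [hsplit, haxa, hax]
  match_scalars <;> first | ring1 | linear_combination hcs

variable {γ : ι → A}

theorem majorana_mul_bilinear_sub_bilinear_mul [DecidableEq ι] (hsq : ∀ μ, γ μ * γ μ = 1)
    (hanti : ∀ μ ν, μ ≠ ν → γ μ * γ ν = -(γ ν * γ μ)) (μ i j : ι) :
    γ μ * (γ i * γ j) - γ i * γ j * γ μ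
      = (if μ = i then (2 : K) • γ j else 0) - (if μ = j then (2 : K) • γ i else 0) := by
  have hanticomm : ∀ ν, γ μ * γ ν + γ ν * γ μ = if μ = ν then (2 : K) • 1 else 0 := by
    intro ν
    split_ifs with h
    · subst h; rw [hsq, two_smul]
    · rw [hanti μ ν h, neg_add_cancel]
  have hexpand : γ μ * (γ i * γ j) - γ i * γ j * γ μ
      = (γ μ * γ i + γ i * γ μ) * γ j - γ i * (γ μ * γ j + γ j * γ μ) := by noncomm_ring
  rw [hexpand, hanticomm, hanticomm]
  split_ifs <;> simp

theorem sum_smul_majorana_mul_bilinear_sub [Fintype ι] [DecidableEq ι] (hsq : ∀ μ, γ μ * γ μ = 1)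
    (hanti : ∀ μ ν, μ ≠ ν → γ μ * γ ν = -(γ ν * γ μ)) (ψ : ι → K) (i j : ι) :
    (∑ μ, ψ μ • γ μ) * (γ i * γ j) - γ i * γ j * (∑ μ, ψ μ • γ μ)
      = (2 * ψ i) • γ j - (2 * ψ j) • γ i := by
  calc (∑ μ, ψ μ • γ μ) * (γ i * γ j) - γ i * γ j * (∑ μ, ψ μ • γ μ)
      = ∑ μ, ψ μ • (γ μ * (γ i * γ j) - γ i * γ j * γ μ) := by
        simp only [Finset.sum_mul, Finset.mul_sum, ← Finset.sum_sub_distrib, smul_mul_assoc,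
          mul_smul_comm, smul_sub]
    _ = (2 * ψ i) • γ j - (2 * ψ j) • γ i := by
        simp only [majorana_mul_bilinear_sub_bilinear_mul (K := K) hsq hanti, smul_sub, smul_ite,
          smul_zero, Finset.sum_sub_distrib, Finset.sum_ite_eq', Finset.mem_univ, if_true,
          smul_smul, mul_comm (ψ _) 2]

theorem majorana_sub_mul_bilinear (hsq : ∀ μ, γ μ * γ μ = 1)
    (hanti : ∀ μ ν, μ ≠ ν → γ μ * γ ν = -(γ ν * γ μ)) {i j : ι} (hij : i ≠ j) (u v : K) :
    (u • γ j - v • γ i) * (γ i * γ j) = -(u • γ i) - v • γ j := by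
  have hj : γ j * (γ i * γ j) = -γ i := by
    rw [← mul_assoc, hanti j i hij.symm, neg_mul, mul_assoc, hsq, mul_one]
  have hi : γ i * (γ i * γ j) = γ j := by rw [← mul_assoc, hsq, one_mul]
  rw [sub_mul, smul_mul_assoc, smul_mul_assoc, hj, hi, smul_neg]

theorem majorana_bilinear_mul_self (hsq : ∀ μ, γ μ * γ μ = 1)
    (hanti : ∀ μ ν, μ ≠ ν → γ μ * γ ν = -(γ ν * γ μ)) {i j : ι} (hij : i ≠ j) :
    γ i * γ j * (γ i * γ j) = -1 := by
  rw [mul_assoc, ← mul_assoc (γ j), hanti j i hij.symm, neg_mul, mul_assoc, hsq, mul_one,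
    mul_neg, hsq]

theorem rotor_conj_sum_smul_majorana [Fintype ι] [DecidableEq ι] (hsq : ∀ μ, γ μ * γ μ = 1)
    (hanti : ∀ μ ν, μ ≠ ν → γ μ * γ ν = -(γ ν * γ μ)) {i j : ι} (hij : i ≠ j) (ψ : ι → K)
    {c s : K} (hcs : c ^ 2 + s ^ 2 = 1) :
    (c • 1 + s • (γ i * γ j)) * (∑ μ, ψ μ • γ μ) * (c • 1 - s • (γ i * γ j))
      = ∑ μ, ψ μ • γ μ + (2 * c * s * ψ j - 2 * s ^ 2 * ψ i) • γ i
          - (2 * c * s * ψ i + 2 * s ^ 2 * ψ j) • γ j := by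
  rw [rotor_conj_eq (majorana_bilinear_mul_self hsq hanti hij)
    (sum_smul_majorana_mul_bilinear_sub hsq hanti ψ i j) hcs,
    majorana_sub_mul_bilinear hsq hanti hij]
  module

theorem map_rotor_conj_sum_smul_majorana [Fintype ι] [DecidableEq ι] (hsq : ∀ μ, γ μ * γ μ = 1)
    (hanti : ∀ μ ν, μ ≠ ν → γ μ * γ ν = -(γ ν * γ μ)) {i j : ι} (hij : i ≠ j) (ψ : ι → K)
    {c s : K} (hcs : c ^ 2 + s ^ 2 = 1) {x : A} (hx : x = ∑ μ, ψ μ • γ μ)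
    (F : A →ₗ[K] A) {ξ : K} {L R : A} (hFi : F (γ i) = ξ • L) (hFj : F (γ j) = ξ • R) :
    F ((c • 1 + s • (γ i * γ j)) * x * (c • 1 - s • (γ i * γ j)))
      = F x + (ξ * (2 * c * s * ψ j - 2 * s ^ 2 * ψ i)) • L
          - (ξ * (2 * c * s * ψ i + 2 * s ^ 2 * ψ j)) • R := by
  rw [hx, rotor_conj_sum_smul_majorana hsq hanti hij ψ hcs, map_sub, map_add, map_smul, map_smul,
    hFi, hFj, smul_smul, smul_smul, mul_comm ξ, mul_comm ξ]

end Majorana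

theorem mul_self_eq_one_of_car {K A ι : Type*} [Field K] [CharZero K] [Ring A] [Algebra K A]
    [DecidableEq ι] {γ : ι → A}
    (hCAR : ∀ μ ν, γ μ * γ ν + γ ν * γ μ = if μ = ν then (2 : K) • 1 else 0) (μ : ι) :
    γ μ * γ μ = 1 := by
  have h := hCAR μ μ
  rw [if_pos rfl, ← two_smul K] at h
  exact smul_right_injective A two_ne_zero h

theorem mul_eq_neg_mul_of_car {K A ι : Type*} [CommRing K] [Ring A] [Algebra K A]
    [DecidableEq ι] {γ : ι → A}
    (hCAR : ∀ μ ν, γ μ * γ ν + γ ν * γ μ = if μ = ν then (2 : K) • 1 else 0) {μ ν : ι}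
    (h : μ ≠ ν) : γ μ * γ ν = -(γ ν * γ μ) := by
  have h' := hCAR μ ν
  rw [if_neg h] at h'
  exact eq_neg_of_add_eq_zero_left h'

theorem conjTranspose_rotor {n : Type*} [Fintype n] [DecidableEq n]
    {a b : Matrix n n ℂ} (ha : a.IsHermitian) (hb : b.IsHermitian) (hab : a * b = -(b * a))
    (c s : ℝ) : ((c : ℂ) • 1 - (s : ℂ) • (a * b))ᴴ = (c : ℂ) • 1 + (s : ℂ) • (a * b) := by
  rw [conjTranspose_sub, conjTranspose_smul, conjTranspose_smul, conjTranspose_one,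
    conjTranspose_mul, ha.eq, hb.eq, ← neg_eq_iff_eq_neg.mpr hab]
  simp only [star_def, conj_ofReal, smul_neg, sub_neg_eq_add]

theorem abs_inv_sqrt_two_mul_le_one {ξ : ℝ} (hξ : 1 / 2 ≤ ξ ^ 2) : |1 / (√2 * ξ)| ≤ 1 := by
  rw [← sq_le_one_iff_abs_le_one, div_pow, mul_pow, Real.sq_sqrt zero_le_two,
    div_le_one (by positivity)]
  linarith

theorem two_mul_sin_arcsin_sq_mul_sq {ξ : ℝ} (hξ : 1 / 2 ≤ ξ ^ 2) :
    2 * Real.sin (Real.arcsin (1 / (√2 * ξ))) ^ 2 * ξ ^ 2 = 1 := by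
  obtain ⟨hlo, hhi⟩ := abs_le.mp (abs_inv_sqrt_two_mul_le_one hξ)
  have hξ0 : ξ ≠ 0 := by rintro rfl; norm_num at hξ
  rw [Real.sin_arcsin hlo hhi, div_pow, mul_pow, Real.sq_sqrt zero_le_two]
  field_simp

theorem two_mul_cos_arcsin_mul_sin_arcsin_mul_sq {ξ : ℝ} (hξpos : 0 < ξ) (hξ : 1 / 2 ≤ ξ ^ 2) :
    2 * Real.cos (Real.arcsin (1 / (√2 * ξ))) * Real.sin (Real.arcsin (1 / (√2 * ξ))) * ξ ^ 2
      = √(2 * ξ ^ 2 - 1) := by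
  obtain ⟨hlo, hhi⟩ := abs_le.mp (abs_inv_sqrt_two_mul_le_one hξ)
  have hsqrt2 : √2 ^ 2 = 2 := Real.sq_sqrt zero_le_two
  have hcos : 1 - (1 / (√2 * ξ)) ^ 2 = (2 * ξ ^ 2 - 1) / (√2 * ξ) ^ 2 := by
    field_simp
    linear_combination ξ ^ 2 * hsqrt2
  rw [Real.sin_arcsin hlo hhi, Real.cos_arcsin, hcos, Real.sqrt_div (by linarith),
    Real.sqrt_sq (by positivity)]
  field_simp
  linear_combination -√(2 * ξ ^ 2 - 1) * hsqrt2

theorem braiding_lemma_one_general (N d : ℕ)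
    (γ : Fin (2 * N) → Matrix (Fin d) (Fin d) ℂ)
    (hHerm : ∀ μ, (γ μ).IsHermitian)
    (hCAR : ∀ μ ν, γ μ * γ ν + γ ν * γ μ = if μ = ν then (2 : ℂ) • 1 else 0)
    (i j : Fin (2 * N)) (hi : (i : ℕ) = 0) (hj : (j : ℕ) = 2 * N - 1)
    (ψL ψR : Fin (2 * N) → ℝ)
    (ΓL ΓR : Matrix (Fin d) (Fin d) ℂ)
    (hΓL : ΓL = ∑ μ, (ψL μ : ℂ) • γ μ)
    (hΓR : ΓR = ∑ μ, (ψR μ : ℂ) • γ μ)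
    (ξ : ℝ) (hξpos : 0 < ξ) (hξ : (1 : ℝ) / 2 ≤ ξ ^ 2)
    (hedgeL : ψL i = ξ) (hedgeR : ψR j = ξ)
    (hcrossL : ψL j = 0) (hcrossR : ψR i = 0)
    (F₀ : Matrix (Fin d) (Fin d) ℂ →ₗ[ℂ] Matrix (Fin d) (Fin d) ℂ)
    (hF₀L : F₀ ΓL = ΓL) (hF₀R : F₀ ΓR = ΓR)
    (hF₀γ1 : F₀ (γ i) = (ξ : ℂ) • ΓL) (hF₀γ2N : F₀ (γ j) = (ξ : ℂ) • ΓR)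
    (α₀ : ℝ) (hα₀ : α₀ = Real.arcsin (1 / (Real.sqrt 2 * ξ)))
    (p : ℝ) (hp : p = Real.sqrt (2 * ξ ^ 2 - 1))
    (V : Matrix (Fin d) (Fin d) ℂ)
    (hV : V = (Real.cos α₀ : ℂ) • 1 - (Real.sin α₀ : ℂ) • (γ i * γ j)) :
    F₀ (Vᴴ * ΓR * V) = (p : ℂ) • ΓL ∧ F₀ (Vᴴ * ΓL * V) = -((p : ℂ) • ΓR) := by
  have hij : i ≠ j := Fin.ne_of_val_ne (by omega)
  have hsq := mul_self_eq_one_of_car hCAR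
  have hanti : ∀ μ ν, μ ≠ ν → γ μ * γ ν = -(γ ν * γ μ) :=
    fun _ _ => mul_eq_neg_mul_of_car hCAR
  have hcs : (Real.cos α₀ : ℂ) ^ 2 + (Real.sin α₀ : ℂ) ^ 2 = 1 := by
    exact_mod_cast Real.cos_sq_add_sin_sq α₀
  have hss : 2 * (Real.sin α₀ : ℂ) ^ 2 * (ξ : ℂ) ^ 2 = 1 := by
    exact_mod_cast hα₀ ▸ two_mul_sin_arcsin_sq_mul_sq hξ
  have hcs_p : 2 * (Real.cos α₀ : ℂ) * (Real.sin α₀ : ℂ) * (ξ : ℂ) ^ 2 = p := by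
    exact_mod_cast hα₀ ▸ hp ▸ two_mul_cos_arcsin_mul_sin_arcsin_mul_sq hξpos hξ
  set c : ℂ := (Real.cos α₀ : ℂ)
  set s : ℂ := (Real.sin α₀ : ℂ)
  have hconj : ∀ (ψ : Fin (2 * N) → ℝ) (Γ : Matrix (Fin d) (Fin d) ℂ),
      Γ = ∑ μ, (ψ μ : ℂ) • γ μ → F₀ (Vᴴ * Γ * V) = F₀ Γ
        + ((ξ : ℂ) * (2 * c * s * ψ j - 2 * s ^ 2 * ψ i)) • ΓL
        - ((ξ : ℂ) * (2 * c * s * ψ i + 2 * s ^ 2 * ψ j)) • ΓR := by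
    intro ψ Γ hΓ
    rw [hV, conjTranspose_rotor (hHerm i) (hHerm j) (hanti i j hij)]
    exact map_rotor_conj_sum_smul_majorana hsq hanti hij _ hcs hΓ F₀ hF₀γ1 hF₀γ2N
  constructor
  · rw [hconj ψR ΓR hΓR, hF₀R, hcrossR, hedgeR]
    match_scalars
    · linear_combination -hss
    · linear_combination hcs_p
  · rw [hconj ψL ΓL hΓL, hF₀L, hcrossL, hedgeL]
    match_scalars
    · linear_combination -hss
    · linear_combination -hcs_p

/-- Braiding Lemma 1, algebraic form: Suppose `γ_μ` are Majorana
operators, `Γ_L = Σ ψL_μ γ_μ` and `Γ_R = Σ ψR_μ γ_μ` are the (zero-frequency) Majorana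
modes, and the zero-frequency Fourier projection `F₀` (a linear map fixing `Γ_L, Γ_R`,
since they commute with `U_F`) satisfies `F₀(γ_1) = ξ Γ_L` and `F₀(γ_{2N}) = ξ Γ_R`
(only the Majorana modes overlap zero frequency). Assume the cross-boundary amplitudes
vanish, `ψR_1 = ψL_{2N} = 0`, equal edge amplitudes `ψL_1 = ψR_{2N} = ξ` with
`ξ² ≥ 1/2`, `ξ > 0`. Then the braiding channel `E_α(X) = F₀(V(α)† X V(α))` with
`V(α) = cos α • I − sin α • γ_1 γ_{2N}` and `α₀ = arcsin(1/(√2 ξ))` satisfies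
`E_{α₀}(Γ_R) = p Γ_L` and `E_{α₀}(Γ_L) = −p Γ_R`, where `p = √(2ξ² − 1)`. -/
theorem braiding_lemma_one (N d : ℕ) (hN : 0 < N)
    (γ : Fin (2 * N) → Matrix (Fin d) (Fin d) ℂ)
    (hHerm : ∀ μ, (γ μ).IsHermitian)
    (hCAR : ∀ μ ν, γ μ * γ ν + γ ν * γ μ = if μ = ν then (2 : ℂ) • 1 else 0)
    (i j : Fin (2 * N)) (hi : (i : ℕ) = 0) (hj : (j : ℕ) = 2 * N - 1)
    (ψL ψR : Fin (2 * N) → ℝ)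
    (ΓL ΓR : Matrix (Fin d) (Fin d) ℂ)
    (hΓL : ΓL = ∑ μ, (ψL μ : ℂ) • γ μ)
    (hΓR : ΓR = ∑ μ, (ψR μ : ℂ) • γ μ)
    (ξ : ℝ) (hξpos : 0 < ξ) (hξ : (1 : ℝ) / 2 ≤ ξ ^ 2)
    (hedgeL : ψL i = ξ) (hedgeR : ψR j = ξ)
    (hcrossL : ψL j = 0) (hcrossR : ψR i = 0)
    (F₀ : Matrix (Fin d) (Fin d) ℂ →ₗ[ℂ] Matrix (Fin d) (Fin d) ℂ)
    (hF₀L : F₀ ΓL = ΓL) (hF₀R : F₀ ΓR = ΓR)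
    (hF₀γ1 : F₀ (γ i) = (ξ : ℂ) • ΓL) (hF₀γ2N : F₀ (γ j) = (ξ : ℂ) • ΓR)
    (α₀ : ℝ) (hα₀ : α₀ = Real.arcsin (1 / (Real.sqrt 2 * ξ)))
    (p : ℝ) (hp : p = Real.sqrt (2 * ξ ^ 2 - 1))
    (V : Matrix (Fin d) (Fin d) ℂ)
    (hV : V = (Real.cos α₀ : ℂ) • 1 - (Real.sin α₀ : ℂ) • (γ i * γ j)) :
    F₀ (Vᴴ * ΓR * V) = (p : ℂ) • ΓL ∧ F₀ (Vᴴ * ΓL * V) = -((p : ℂ) • ΓR) :=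
  braiding_lemma_one_general N d γ hHerm hCAR i j hi hj ψL ψR ΓL ΓR hΓL hΓR ξ hξpos hξ hedgeL hedgeR
    hcrossL hcrossR F₀ hF₀L hF₀R hF₀γ1 hF₀γ2N α₀ hα₀ p hp V hV
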